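/- arXiv:2110.09078 — 5 statements merged into one kernel-verified Lean document; each statement's English description precedes it below -/
import Mathlib

section
/- Let k, α > 0 and let L be the Laplacian of an undirected weighted graph on N vertices (so L is symmetric and L𝟙_N = 0), with 𝑳 = L ⊗ I_{Nn}. Assume each J_i is convex in x_i. Then x* ∈ ℝ^{Nn} is a Nash equilibrium of the game if and only if the point (x, v, 𝒙) = (x*, 0_{Nn}, 𝟙_N ⊗ x*) is an equilibrium of the closed-loop dynamics ẋ = v, v̇ ∈ −kv − 𝐅(𝒙) − (α/k)R𝑳𝒙, S𝒙̇ = −αS𝑳𝒙; that is: v* = 0, 0 ∈ −k·0 − 𝐅(𝟙_N ⊗ x*) − (α/k)R𝑳(𝟙_N ⊗ x*), and 0 = −αS𝑳(𝟙_N ⊗ x*). -/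
open scoped RealInnerProductSpace
open Filter Set

noncomputable section

/-- Strategy space ℝⁿ of a single agent. -/
abbrev Strat (n : ℕ) := EuclideanSpace ℝ (Fin n)

/-- Space ℝ^{Nn} of strategy profiles (with the Euclidean norm). -/
abbrev Profile (N n : ℕ) := PiLp 2 (fun _ : Fin N => Strat n)

/-- Space ℝ^{N²n} of stacked estimates (with the Euclidean norm). -/
abbrev Stacked (N n : ℕ) := PiLp 2 (fun _ : Fin N => Profile N n)

/-- Subdifferential of a (convex) function `f` at `x`:
all `g` with `f y ≥ f x + ⟨g, y - x⟩` for every `y`. -/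
def subdiff {n : ℕ} (f : Strat n → ℝ) (x : Strat n) : Set (Strat n) :=
  {g | ∀ y, f x + ⟪g, y - x⟫ ≤ f y}

/-- Partial subdifferential `∂_{x_i} J_i` at the profile `x`: the subdifferential at `x i`
of the map `y ↦ J i (x with i-th block replaced by y)`. -/
def partialSubdiff {N n : ℕ} (J : Fin N → Profile N n → ℝ) (i : Fin N)
    (x : Profile N n) : Set (Strat n) :=
  subdiff (fun y => J i (WithLp.toLp 2 (Function.update x i y))) (x i)

/-- Nash equilibrium of the game with costs `J`. -/
def IsNashEq {N n : ℕ} (J : Fin N → Profile N n → ℝ) (x : Profile N n) : Prop :=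
  ∀ (i : Fin N) (y : Strat n), J i x ≤ J i (WithLp.toLp 2 (Function.update x i y))

/-- Pseudo-gradient `F(x) = ∏ᵢ ∂_{x_i}J_i(x)`. -/
def pseudoGrad {N n : ℕ} (J : Fin N → Profile N n → ℝ) (x : Profile N n) :
    Set (Profile N n) :=
  {d | ∀ i, d i ∈ partialSubdiff J i x}

/-- Augmented pseudo-gradient `𝐅(𝒙) = ∏ᵢ ∂_{x_i}J_i(xᵢ, 𝒙ⁱ₋ᵢ)`, where `X i` is agent `i`'s
estimate of the full profile. -/
def augPseudoGrad {N n : ℕ} (J : Fin N → Profile N n → ℝ) (X : Stacked N n) :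
    Set (Profile N n) :=
  {d | ∀ i, d i ∈ partialSubdiff J i (X i)}

/-- The stacked vector `𝟙_N ⊗ y`. -/
def constStack {N n : ℕ} (y : Profile N n) : Stacked N n := WithLp.toLp 2 (fun _ => y)

/-- `𝑳Z` where `𝑳 = L ⊗ I_{Nn}`. -/
def lapApply {N n : ℕ} (L : Matrix (Fin N) (Fin N) ℝ) (Z : Stacked N n) : Stacked N n :=
  WithLp.toLp 2 (fun i => ∑ j, L i j • Z j)

/-- `RZ`: the block-diagonal selection matrix `R = blkdiag(R₁,…,R_N)` applied to `Z`,
extracting the `i`-th `n`-block of `Zⁱ`. -/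
def Rsel {N n : ℕ} (Z : Stacked N n) : Profile N n := WithLp.toLp 2 (fun i => Z i i)

/-!
A profile is a Nash equilibrium exactly when `0` lies in every partial subdifferential, since a
global subgradient `0` at `x` says that `x` minimizes. At a consensus stack `𝟙_N ⊗ x*` the
augmented pseudo-gradient is the pseudo-gradient and the Laplacian term vanishes because
`L𝟙_N = 0`, so the equilibrium conditions of the dynamics reduce to `0 ∈ F(x*)`.
-/

theorem zero_mem_subdiff_iff {n : ℕ} {f : Strat n → ℝ} {x : Strat n} :
    0 ∈ subdiff f x ↔ ∀ y, f x ≤ f y := by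
  simp only [subdiff, Set.mem_ofPred_eq, inner_zero_left, add_zero]

theorem zero_mem_partialSubdiff_iff {N n : ℕ} {J : Fin N → Profile N n → ℝ} {i : Fin N}
    {x : Profile N n} :
    0 ∈ partialSubdiff J i x ↔ ∀ y, J i x ≤ J i (WithLp.toLp 2 (Function.update x i y)) := by
  rw [partialSubdiff, zero_mem_subdiff_iff, Function.update_eq_self, WithLp.toLp_ofLp]

theorem isNashEq_iff_zero_mem_pseudoGrad {N n : ℕ} {J : Fin N → Profile N n → ℝ}
    {x : Profile N n} : IsNashEq J x ↔ 0 ∈ pseudoGrad J x := by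
  simp only [IsNashEq, pseudoGrad, Set.mem_ofPred_eq, PiLp.zero_apply,
    zero_mem_partialSubdiff_iff]

theorem augPseudoGrad_constStack {N n : ℕ} (J : Fin N → Profile N n → ℝ) (x : Profile N n) :
    augPseudoGrad J (constStack x) = pseudoGrad J x :=
  rfl

theorem lapApply_constStack {N n : ℕ} {L : Matrix (Fin N) (Fin N) ℝ}
    (hLrow : ∀ i, ∑ j, L i j = 0) (x : Profile N n) :
    lapApply L (constStack x) = 0 := by
  ext i : 1
  simp only [lapApply, constStack, WithLp.ofLp_toLp, ← Finset.sum_smul, hLrow, zero_smul,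
    PiLp.zero_apply]

@[simp]
theorem Rsel_zero {N n : ℕ} : Rsel (0 : Stacked N n) = 0 :=
  rfl

theorem stmt2_general (N n : ℕ) (J : Fin N → Profile N n → ℝ)
    (k α : ℝ)
    (L : Matrix (Fin N) (Fin N) ℝ)
    (hLrow : ∀ i, ∑ j, L i j = 0)
    (xs : Profile N n) :
    IsNashEq J xs ↔
      ((0 : Profile N n) = (0 : Profile N n) ∧   -- v* = 0 at the claimed equilibrium
      (∃ d ∈ augPseudoGrad J (constStack xs),
        (0 : Profile N n) =
          -k • (0 : Profile N n) - d - (α / k) • Rsel (lapApply L (constStack xs))) ∧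
      (∀ (i m : Fin N), m ≠ i →
        -α • (lapApply L (constStack xs) i m) = (0 : Strat n))) := by
  simp only [lapApply_constStack hLrow, augPseudoGrad_constStack, Rsel_zero, smul_zero,
    sub_zero, zero_sub, PiLp.zero_apply, true_and, implies_true, and_true,
    isNashEq_iff_zero_mem_pseudoGrad, eq_comm (a := (0 : Profile N n)), neg_eq_zero,
    exists_eq_right]

/-- `x*` is a Nash equilibrium iff `(x*, 0, 𝟙_N ⊗ x*)` is an equilibrium of
the closed-loop dynamics `ẋ = v`, `v̇ ∈ -kv - 𝐅(𝒙) - (α/k)R𝑳𝒙`, `S𝒙̇ = -αS𝑳𝒙`;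
i.e. `v* = 0`, `0 ∈ -k•0 - 𝐅(𝟙_N ⊗ x*) - (α/k)R𝑳(𝟙_N ⊗ x*)` and
`0 = -αS𝑳(𝟙_N ⊗ x*)` (the latter blockwise, for all off-`i` blocks). -/
theorem stmt2 (N n : ℕ) (hN : 2 ≤ N) (J : Fin N → Profile N n → ℝ)
    (hconv : ∀ (i : Fin N) (x : Profile N n),
      ConvexOn ℝ Set.univ (fun y => J i (WithLp.toLp 2 (Function.update x i y))))
    (k α : ℝ) (hk : 0 < k) (hα : 0 < α)
    (L : Matrix (Fin N) (Fin N) ℝ) (hLsymm : ∀ i j, L i j = L j i)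
    (hLrow : ∀ i, ∑ j, L i j = 0)
    (xs : Profile N n) :
    IsNashEq J xs ↔
      ((0 : Profile N n) = (0 : Profile N n) ∧   -- v* = 0 at the claimed equilibrium
      (∃ d ∈ augPseudoGrad J (constStack xs),
        (0 : Profile N n) =
          -k • (0 : Profile N n) - d - (α / k) • Rsel (lapApply L (constStack xs))) ∧
      (∀ (i m : Fin N), m ≠ i →
        -α • (lapApply L (constStack xs) i m) = (0 : Strat n))) :=
  stmt2_general N n J k α L hLrow xs
end
end

section
/- Let θ, w, λ₂, μ, k, α be positive reals. Let x̃, ṽ, d, d', d* ∈ ℝ^{Nn} and 𝒙̃, 𝒙̃ᶜ, 𝒙̃ᵒ ∈ ℝ^{N²n} with 𝒙̃ = 𝒙̃ᶜ + 𝒙̃ᵒ and ⟨𝒙̃ᶜ, 𝒙̃ᵒ⟩ = 0. Let 𝑳 be a symmetric linear operator on ℝ^{N²n} and M : ℝ^{N²n} → ℝ^{Nn} a linear map, and assume: 𝑳𝒙̃ᶜ = 0; M𝒙̃ᶜ = 0; ⟨𝒙̃ᵒ, 𝑳𝒙̃ᵒ⟩ ≥ λ₂‖𝒙̃ᵒ‖²;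 ‖Mz‖ ≤ μ‖z‖ for all z; ‖d − d'‖ ≤ θ‖𝒙̃ᵒ‖; ‖d' − d*‖ ≤ θ‖x̃‖; and ⟨x̃, d' − d*⟩ ≥ w‖x̃‖². Then −k‖ṽ‖² − 2⟨ṽ, d − d*⟩ − (2α/k)⟨ṽ, M𝒙̃⟩ − k⟨x̃, d − d*⟩ − α⟨𝒙̃, 𝑳𝒙̃⟩ ≤ −(kw − 2θ)‖x̃‖² − (k − 2θ − αμ/k)‖ṽ‖² − (αλ₂ − θ − αμ/k − k²θ/4)‖𝒙̃ᵒ‖². -/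
/-!
Split `d − d* = (d − d') + (d' − d*)` and bound every cross term by Cauchy–Schwarz followed
by `2xy ≤ x² + y²`; for `kθ‖x̃‖‖𝒙̃ᵒ‖` the pair is `(‖x̃‖, k‖𝒙̃ᵒ‖/2)`, which is where `k²θ/4`
comes from. The consensus component drops out because `𝑳` and `M` annihilate it, and
`⟨x̃, d' − d*⟩`, `⟨𝒙̃ᵒ, 𝑳𝒙̃ᵒ⟩` supply the negative definite part.
-/

open scoped RealInnerProductSpace

theorem neg_real_inner_le_of_norm_le {E : Type*} [SeminormedAddCommGroup E]
    [InnerProductSpace ℝ E] (u : E) {v : E} {r : ℝ} (hv : ‖v‖ ≤ r) :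
    -⟪u, v⟫ ≤ ‖u‖ * r :=
  calc -⟪u, v⟫ ≤ ‖u‖ * ‖v‖ := by simpa using real_inner_le_norm u (-v)
    _ ≤ ‖u‖ * r := mul_le_mul_of_nonneg_left hv (norm_nonneg u)

theorem LinearMap.IsSymmetric.inner_map_add_of_map_eq_zero {𝕜 E : Type*} [RCLike 𝕜]
    [SeminormedAddCommGroup E] [InnerProductSpace 𝕜 E] {T : E →ₗ[𝕜] E}
    (hT : T.IsSymmetric) {x : E} (hx : T x = 0) (y : E) :
    inner 𝕜 (x + y) (T (x + y)) = inner 𝕜 y (T y) := by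
  rw [map_add, hx, zero_add, inner_add_left, ← hT, hx, inner_zero_left, zero_add]

theorem stmt7_general {E F : Type*} [NormedAddCommGroup E] [InnerProductSpace ℝ E]
    [NormedAddCommGroup F] [InnerProductSpace ℝ F]
    (θ w lam2 μ k α : ℝ)
    (hθ : 0 < θ) (hμ : 0 < μ) (hk : 0 < k) (hα : 0 < α)
    (xt vt d d' ds : E) (Xt Xc Xo : F)
    (hdecomp : Xt = Xc + Xo)
    (Lop : F →ₗ[ℝ] F) (hLsym : ∀ u v : F, ⟪Lop u, v⟫ = ⟪u, Lop v⟫)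
    (M : F →ₗ[ℝ] E)
    (hLc : Lop Xc = 0) (hMc : M Xc = 0)
    (hLo : lam2 * ‖Xo‖ ^ 2 ≤ ⟪Xo, Lop Xo⟫)
    (hM : ∀ z : F, ‖M z‖ ≤ μ * ‖z‖)
    (hdd' : ‖d - d'‖ ≤ θ * ‖Xo‖) (hd's : ‖d' - ds‖ ≤ θ * ‖xt‖)
    (hmono : w * ‖xt‖ ^ 2 ≤ ⟪xt, d' - ds⟫) :
    -k * ‖vt‖ ^ 2 - 2 * ⟪vt, d - ds⟫ - (2 * α / k) * ⟪vt, M Xt⟫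
        - k * ⟪xt, d - ds⟫ - α * ⟪Xt, Lop Xt⟫
      ≤ -(k * w - 2 * θ) * ‖xt‖ ^ 2 - (k - 2 * θ - α * μ / k) * ‖vt‖ ^ 2
        - (α * lam2 - θ - α * μ / k - k ^ 2 * θ / 4) * ‖Xo‖ ^ 2 := by
  have hLX : ⟪Xt, Lop Xt⟫ = ⟪Xo, Lop Xo⟫ :=
    hdecomp ▸ LinearMap.IsSymmetric.inner_map_add_of_map_eq_zero hLsym hLc Xo
  have hMX : M Xt = M Xo := by rw [hdecomp, map_add, hMc, zero_add]
  rw [hLX, hMX, ← sub_add_sub_cancel d d' ds, inner_add_right, inner_add_right]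
  have hv_dd' := neg_real_inner_le_of_norm_le vt hdd'
  have hv_d's := neg_real_inner_le_of_norm_le vt hd's
  have hx_dd' := neg_real_inner_le_of_norm_le xt hdd'
  have hv_M := neg_real_inner_le_of_norm_le vt (hM Xo)
  have hvo := two_mul_le_add_sq ‖vt‖ ‖Xo‖
  have hxv := two_mul_le_add_sq ‖xt‖ ‖vt‖
  have hxo := two_mul_le_add_sq ‖xt‖ (k * ‖Xo‖ / 2)
  linear_combination 2 * hv_dd' + 2 * hv_d's + k * hx_dd' + (2 * α / k) * hv_M
    + k * hmono + α * hLo + θ * hvo + θ * hxv + (α * μ / k) * hvo + θ * hxo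

/-- the key Lie-derivative estimate for the continuous-time rule. -/
theorem stmt7 {E F : Type*} [NormedAddCommGroup E] [InnerProductSpace ℝ E]
    [NormedAddCommGroup F] [InnerProductSpace ℝ F]
    (θ w lam2 μ k α : ℝ)
    (hθ : 0 < θ) (hw : 0 < w) (hlam : 0 < lam2) (hμ : 0 < μ) (hk : 0 < k) (hα : 0 < α)
    (xt vt d d' ds : E) (Xt Xc Xo : F)
    (hdecomp : Xt = Xc + Xo) (horth : ⟪Xc, Xo⟫ = 0)
    (Lop : F →ₗ[ℝ] F) (hLsym : ∀ u v : F, ⟪Lop u, v⟫ = ⟪u, Lop v⟫)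
    (M : F →ₗ[ℝ] E)
    (hLc : Lop Xc = 0) (hMc : M Xc = 0)
    (hLo : lam2 * ‖Xo‖ ^ 2 ≤ ⟪Xo, Lop Xo⟫)
    (hM : ∀ z : F, ‖M z‖ ≤ μ * ‖z‖)
    (hdd' : ‖d - d'‖ ≤ θ * ‖Xo‖) (hd's : ‖d' - ds‖ ≤ θ * ‖xt‖)
    (hmono : w * ‖xt‖ ^ 2 ≤ ⟪xt, d' - ds⟫) :
    -k * ‖vt‖ ^ 2 - 2 * ⟪vt, d - ds⟫ - (2 * α / k) * ⟪vt, M Xt⟫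
        - k * ⟪xt, d - ds⟫ - α * ⟪Xt, Lop Xt⟫
      ≤ -(k * w - 2 * θ) * ‖xt‖ ^ 2 - (k - 2 * θ - α * μ / k) * ‖vt‖ ^ 2
        - (α * lam2 - θ - α * μ / k - k ^ 2 * θ / 4) * ‖Xo‖ ^ 2 :=
  stmt7_general θ w lam2 μ k α hθ hμ hk hα xt vt d d' ds Xt Xc Xo hdecomp Lop hLsym M hLc hMc hLo hM
    hdd' hd's hmono
end

section
/- Let θ, w, λ₂, μ, ν, k, α be positive reals. Let x̃, ṽ, d, d', d* ∈ ℝ^{Nn}, let 𝒙̃, 𝒙̃ᶜ, 𝒙̃ᵒ, e ∈ ℝ^{N²n} with 𝒙̃ = 𝒙̃ᶜ + 𝒙̃ᵒ and ⟨𝒙̃ᶜ, 𝒙̃ᵒ⟩ = 0, let 𝑳 be a symmetric linear operator on ℝ^{N²n} and M : ℝ^{N²n} → ℝ^{Nn} linear, and assume: 𝑳𝒙̃ᶜ = 0; M𝒙̃ᶜ = 0; ⟨𝒙̃ᵒ, 𝑳𝒙̃ᵒ⟩ ≥ λ₂‖𝒙̃ᵒ‖²; ‖Mz‖ ≤ μ‖z‖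 and ‖𝑳z‖ ≤ ν‖z‖ for all z; ‖d − d'‖ ≤ θ‖𝒙̃ᵒ‖; ‖d' − d*‖ ≤ θ‖x̃‖; ⟨x̃, d' − d*⟩ ≥ w‖x̃‖². Then ζ̄ := −k‖ṽ‖² − 2⟨ṽ, d − d*⟩ − (2α/k)⟨ṽ, M(𝒙̃ + e)⟩ − k⟨x̃, d − d*⟩ − α⟨𝒙̃, 𝑳(𝒙̃ + e)⟩ satisfies ζ̄ ≤ −(kw − 2θ)‖x̃‖² − (k − 2θ − 2αμ/k)‖ṽ‖² − (αλ₂ − θ − αμ/k − αν/(2k) − k²θ/4)‖𝒙̃ᵒ‖² + (αμ/k + αkν/2)‖e‖². In particular, if (αλ₂ − θ)k > αμ + k³θ/4 + αν/2 and ‖e‖² ≤ ξ²‖𝒙̃ᵒ‖² with ξ² = ((αλ₂ − θ)k − αμ − k³θ/4 − αν/2)/(αμ + ανk²/2), then ζ̄ ≤ −(kw − 2θ)‖x̃‖² − (k − 2θ − 2αμ/k)‖ṽ‖². -/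
/-!
Each cross term of `ζ̄` is bounded below by Cauchy–Schwarz: the consensus component `𝒙̃ᶜ`
is invisible to `M` and, by symmetry, to `⟨·, 𝑳 ·⟩`, so only `‖x̃‖`, `‖ṽ‖`, `‖𝒙̃ᵒ‖` and `‖e‖`
remain. The resulting quadratic form in these four norms is then split by Young's inequality
`2st ≤ s² + t²`; the mixed products are absorbed into the diagonal coefficients. The threshold
`ξ²` is exactly the ratio at which the `‖e‖²` term cancels the `‖𝒙̃ᵒ‖²` term.
-/

open scoped RealInnerProductSpace

section CrossTerms

variable {E F : Type*} [NormedAddCommGroup E] [InnerProductSpace ℝ E]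
  [NormedAddCommGroup F] [InnerProductSpace ℝ F]

theorem neg_mul_le_real_inner_of_norm_le (x : E) {y : E} {B : ℝ} (h : ‖y‖ ≤ B) :
    -(‖x‖ * B) ≤ ⟪x, y⟫ :=
  calc -(‖x‖ * B) ≤ -(‖x‖ * ‖y‖) := by gcongr
    _ ≤ ⟪x, y⟫ := neg_le_of_abs_le (abs_real_inner_le_norm x y)

theorem neg_mul_le_real_inner_sub (v : E) {d d' d'' : E} {p q : ℝ}
    (h₁ : ‖d - d'‖ ≤ p) (h₂ : ‖d' - d''‖ ≤ q) :
    -(‖v‖ * (p + q)) ≤ ⟪v, d - d''⟫ :=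
  neg_mul_le_real_inner_of_norm_le v <|
    (norm_sub_le_norm_sub_add_norm_sub d d' d'').trans (add_le_add h₁ h₂)

theorem mul_sq_sub_le_real_inner_sub {x d d' d'' : E} {w p : ℝ}
    (hdd' : ‖d - d'‖ ≤ p) (hmono : w * ‖x‖ ^ 2 ≤ ⟪x, d' - d''⟫) :
    w * ‖x‖ ^ 2 - ‖x‖ * p ≤ ⟪x, d - d''⟫ := by
  have hcross := neg_mul_le_real_inner_of_norm_le x hdd'
  rw [← sub_add_sub_cancel d d' d'', inner_add_right]
  linarith

theorem neg_mul_le_real_inner_apply_add {M : F →ₗ[ℝ] E} {μ : ℝ} (hμ : 0 ≤ μ)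
    (hM : ∀ z, ‖M z‖ ≤ μ * ‖z‖) {xc : F} (hMc : M xc = 0) (v : E) (xo e : F) :
    -(‖v‖ * (μ * (‖xo‖ + ‖e‖))) ≤ ⟪v, M (xc + xo + e)⟫ := by
  refine neg_mul_le_real_inner_of_norm_le v ?_
  rw [add_assoc, map_add, hMc, zero_add]
  exact (hM _).trans (by gcongr; exact norm_add_le xo e)

theorem sub_le_real_inner_apply_add {L : F →ₗ[ℝ] F} (hL : L.IsSymmetric) {xc xo e : F}
    {lam ν : ℝ} (hLc : L xc = 0) (hLo : lam * ‖xo‖ ^ 2 ≤ ⟪xo, L xo⟫) (hLe : ‖L e‖ ≤ ν * ‖e‖) :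
    lam * ‖xo‖ ^ 2 - ‖xo‖ * (ν * ‖e‖) ≤ ⟪xc + xo, L (xc + xo + e)⟫ := by
  have hcons : ⟪xc, L (xc + xo + e)⟫ = 0 := by rw [← hL, hLc, inner_zero_left]
  have hcross := neg_mul_le_real_inner_of_norm_le xo hLe
  rw [inner_add_left, hcons, zero_add, map_add, map_add, hLc, zero_add, inner_add_right]
  linarith

end CrossTerms

theorem lieDerivative_le_of_cross_bounds {θ w lam μ ν k α a b c ε I₁ I₂ I₃ I₄ : ℝ}
    (hθ : 0 ≤ θ) (hμ : 0 ≤ μ) (hν : 0 ≤ ν) (hk : 0 < k) (hα : 0 ≤ α)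
    (h₁ : -(b * (θ * c + θ * a)) ≤ I₁) (h₂ : -(b * (μ * (c + ε))) ≤ I₂)
    (h₃ : w * a ^ 2 - a * (θ * c) ≤ I₃) (h₄ : lam * c ^ 2 - c * (ν * ε) ≤ I₄) :
    -k * b ^ 2 - 2 * I₁ - (2 * α / k) * I₂ - k * I₃ - α * I₄
      ≤ -(k * w - 2 * θ) * a ^ 2 - (k - 2 * θ - 2 * α * μ / k) * b ^ 2
        - (α * lam - θ - α * μ / k - α * ν / (2 * k) - k ^ 2 * θ / 4) * c ^ 2
        + (α * μ / k + α * k * ν / 2) * ε ^ 2 := by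
  have young : (-(k * w - 2 * θ) * a ^ 2 - (k - 2 * θ - 2 * α * μ / k) * b ^ 2
        - (α * lam - θ - α * μ / k - α * ν / (2 * k) - k ^ 2 * θ / 4) * c ^ 2
        + (α * μ / k + α * k * ν / 2) * ε ^ 2)
      - (-k * b ^ 2 + 2 * (b * (θ * c + θ * a)) + (2 * α / k) * (b * (μ * (c + ε)))
        - k * (w * a ^ 2 - a * (θ * c)) - α * (lam * c ^ 2 - c * (ν * ε)))
      = θ * (b - a) ^ 2 + θ * (b - c) ^ 2 + (α * μ / k) * ((b - c) ^ 2 + (b - ε) ^ 2)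
        + θ * (a - k * c / 2) ^ 2 + (α * ν / (2 * k)) * (c - k * ε) ^ 2 := by
    field_simp
    ring
  have hsq : 0 ≤ θ * (b - a) ^ 2 + θ * (b - c) ^ 2 + (α * μ / k) * ((b - c) ^ 2 + (b - ε) ^ 2)
      + θ * (a - k * c / 2) ^ 2 + (α * ν / (2 * k)) * (c - k * ε) ^ 2 := by positivity
  have hαk : 0 ≤ 2 * α / k := by positivity
  linarith [mul_le_mul_of_nonneg_left h₂ hαk, mul_le_mul_of_nonneg_left h₃ hk.le,
    mul_le_mul_of_nonneg_left h₄ hα]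

theorem sampling_term_le_of_sq_le {θ lam μ ν k α c ε : ℝ} (hμ : 0 < μ) (hν : 0 ≤ ν)
    (hk : 0 < k) (hα : 0 < α)
    (hε : ε ^ 2 ≤ ((α * lam - θ) * k - α * μ - k ^ 3 * θ / 4 - α * ν / 2) /
          (α * μ + α * ν * k ^ 2 / 2) * c ^ 2) :
    (α * μ / k + α * k * ν / 2) * ε ^ 2
      ≤ (α * lam - θ - α * μ / k - α * ν / (2 * k) - k ^ 2 * θ / 4) * c ^ 2 := by
  calc (α * μ / k + α * k * ν / 2) * ε ^ 2
      ≤ (α * μ / k + α * k * ν / 2) * (((α * lam - θ) * k - α * μ - k ^ 3 * θ / 4 - α * ν / 2) /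
          (α * μ + α * ν * k ^ 2 / 2) * c ^ 2) := by gcongr
    _ = (α * lam - θ - α * μ / k - α * ν / (2 * k) - k ^ 2 * θ / 4) * c ^ 2 := by
      field_simp
      ring

theorem stmt8_general {E F : Type*} [NormedAddCommGroup E] [InnerProductSpace ℝ E]
    [NormedAddCommGroup F] [InnerProductSpace ℝ F]
    (θ w lam2 μ ν k α : ℝ)
    (hθ : 0 < θ) (hμ : 0 < μ) (hν : 0 < ν)
    (hk : 0 < k) (hα : 0 < α)
    (xt vt d d' ds : E) (Xt Xc Xo e : F)
    (hdecomp : Xt = Xc + Xo)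
    (Lop : F →ₗ[ℝ] F) (hLsym : ∀ u v : F, ⟪Lop u, v⟫ = ⟪u, Lop v⟫)
    (M : F →ₗ[ℝ] E)
    (hLc : Lop Xc = 0) (hMc : M Xc = 0)
    (hLo : lam2 * ‖Xo‖ ^ 2 ≤ ⟪Xo, Lop Xo⟫)
    (hM : ∀ z : F, ‖M z‖ ≤ μ * ‖z‖) (hL : ∀ z : F, ‖Lop z‖ ≤ ν * ‖z‖)
    (hdd' : ‖d - d'‖ ≤ θ * ‖Xo‖) (hd's : ‖d' - ds‖ ≤ θ * ‖xt‖)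
    (hmono : w * ‖xt‖ ^ 2 ≤ ⟪xt, d' - ds⟫) :
    (-k * ‖vt‖ ^ 2 - 2 * ⟪vt, d - ds⟫ - (2 * α / k) * ⟪vt, M (Xt + e)⟫
        - k * ⟪xt, d - ds⟫ - α * ⟪Xt, Lop (Xt + e)⟫
      ≤ -(k * w - 2 * θ) * ‖xt‖ ^ 2 - (k - 2 * θ - 2 * α * μ / k) * ‖vt‖ ^ 2
        - (α * lam2 - θ - α * μ / k - α * ν / (2 * k) - k ^ 2 * θ / 4) * ‖Xo‖ ^ 2
        + (α * μ / k + α * k * ν / 2) * ‖e‖ ^ 2) ∧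
    ((α * lam2 - θ) * k > α * μ + k ^ 3 * θ / 4 + α * ν / 2 →
      ‖e‖ ^ 2 ≤ ((α * lam2 - θ) * k - α * μ - k ^ 3 * θ / 4 - α * ν / 2) /
          (α * μ + α * ν * k ^ 2 / 2) * ‖Xo‖ ^ 2 →
      -k * ‖vt‖ ^ 2 - 2 * ⟪vt, d - ds⟫ - (2 * α / k) * ⟪vt, M (Xt + e)⟫
          - k * ⟪xt, d - ds⟫ - α * ⟪Xt, Lop (Xt + e)⟫
        ≤ -(k * w - 2 * θ) * ‖xt‖ ^ 2 - (k - 2 * θ - 2 * α * μ / k) * ‖vt‖ ^ 2) := by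
  subst hdecomp
  have bound := lieDerivative_le_of_cross_bounds hθ.le hμ.le hν.le hk hα.le
    (neg_mul_le_real_inner_sub vt hdd' hd's)
    (neg_mul_le_real_inner_apply_add hμ.le hM hMc vt Xo e)
    (mul_sq_sub_le_real_inner_sub hdd' hmono)
    (sub_le_real_inner_apply_add hLsym hLc hLo (hL e))
  refine ⟨bound, fun _ he => bound.trans ?_⟩
  linarith [sampling_term_le_of_sq_le hμ hν.le hk hα he]

/-- the key Lie-derivative estimate for the rule under discrete-time
communication, together with its consequence under the sampling-error bound. -/
theorem stmt8 {E F : Type*} [NormedAddCommGroup E] [InnerProductSpace ℝ E]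
    [NormedAddCommGroup F] [InnerProductSpace ℝ F]
    (θ w lam2 μ ν k α : ℝ)
    (hθ : 0 < θ) (hw : 0 < w) (hlam : 0 < lam2) (hμ : 0 < μ) (hν : 0 < ν)
    (hk : 0 < k) (hα : 0 < α)
    (xt vt d d' ds : E) (Xt Xc Xo e : F)
    (hdecomp : Xt = Xc + Xo) (horth : ⟪Xc, Xo⟫ = 0)
    (Lop : F →ₗ[ℝ] F) (hLsym : ∀ u v : F, ⟪Lop u, v⟫ = ⟪u, Lop v⟫)
    (M : F →ₗ[ℝ] E)
    (hLc : Lop Xc = 0) (hMc : M Xc = 0)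
    (hLo : lam2 * ‖Xo‖ ^ 2 ≤ ⟪Xo, Lop Xo⟫)
    (hM : ∀ z : F, ‖M z‖ ≤ μ * ‖z‖) (hL : ∀ z : F, ‖Lop z‖ ≤ ν * ‖z‖)
    (hdd' : ‖d - d'‖ ≤ θ * ‖Xo‖) (hd's : ‖d' - ds‖ ≤ θ * ‖xt‖)
    (hmono : w * ‖xt‖ ^ 2 ≤ ⟪xt, d' - ds⟫) :
    (-k * ‖vt‖ ^ 2 - 2 * ⟪vt, d - ds⟫ - (2 * α / k) * ⟪vt, M (Xt + e)⟫
        - k * ⟪xt, d - ds⟫ - α * ⟪Xt, Lop (Xt + e)⟫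
      ≤ -(k * w - 2 * θ) * ‖xt‖ ^ 2 - (k - 2 * θ - 2 * α * μ / k) * ‖vt‖ ^ 2
        - (α * lam2 - θ - α * μ / k - α * ν / (2 * k) - k ^ 2 * θ / 4) * ‖Xo‖ ^ 2
        + (α * μ / k + α * k * ν / 2) * ‖e‖ ^ 2) ∧
    ((α * lam2 - θ) * k > α * μ + k ^ 3 * θ / 4 + α * ν / 2 →
      ‖e‖ ^ 2 ≤ ((α * lam2 - θ) * k - α * μ - k ^ 3 * θ / 4 - α * ν / 2) /
          (α * μ + α * ν * k ^ 2 / 2) * ‖Xo‖ ^ 2 →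
      -k * ‖vt‖ ^ 2 - 2 * ⟪vt, d - ds⟫ - (2 * α / k) * ⟪vt, M (Xt + e)⟫
          - k * ⟪xt, d - ds⟫ - α * ⟪Xt, Lop (Xt + e)⟫
        ≤ -(k * w - 2 * θ) * ‖xt‖ ^ 2 - (k - 2 * θ - 2 * α * μ / k) * ‖vt‖ ^ 2) :=
  stmt8_general θ w lam2 μ ν k α hθ hμ hν hk hα xt vt d d' ds Xt Xc Xo e hdecomp Lop hLsym M hLc hMc
    hLo hM hL hdd' hd's hmono
end

section
/- Let a, b, ξ > 0, let φ(t) = (a + b)(e^{at} − 1)/(a + b(1 − e^{at})), and let τ = (1/a)·ln(1 + aξ/(a + b + bξ)). Then 0 < τ < (1/a)·ln(1 + a/b), φ(τ) = ξ, and φ(t) < ξ for all t ∈ [0, τ). -/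
/-!
Writing `E = e^{at}`, `φ(t)` is the Möbius function `(a + b)(E - 1)/(a + b(1 - E))` of `E`,
which is increasing while its denominator is positive, i.e. below the pole `E = 1 + a/b`.
Solving `φ = ξ` gives `E = 1 + aξ/(a + b + bξ)`, which lies strictly between `1` and the pole,
and `e^{aτ}` is exactly this value.
-/

open Set Real

section RiccatiMobius

variable {a b ξ E : ℝ}

theorem riccati_denom_pos_of_lt_pole (hb : 0 < b) (hE : E < 1 + a / b) :
    0 < a + b * (1 - E) := by
  have : b * (E - 1) < a := (lt_div_iff₀' hb).mp (by linarith)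
  linarith

theorem riccati_mobius_lt_iff (hden : 0 < a + b * (1 - E)) (hD : 0 < a + b + b * ξ) :
    (a + b) * (E - 1) / (a + b * (1 - E)) < ξ ↔ E < 1 + a * ξ / (a + b + b * ξ) := by
  rw [div_lt_iff₀ hden, ← sub_lt_iff_lt_add', lt_div_iff₀ hD]
  constructor <;> intro h <;> linarith

theorem riccati_mobius_threshold (ha : a ≠ 0) (hab : a + b ≠ 0) (hD : a + b + b * ξ ≠ 0) :
    (a + b) * (1 + a * ξ / (a + b + b * ξ) - 1) / (a + b * (1 - (1 + a * ξ / (a + b + b * ξ))))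
      = ξ := by
  have hden : a + b * (1 - (1 + a * ξ / (a + b + b * ξ))) = a * (a + b) / (a + b + b * ξ) := by
    field_simp
    ring
  rw [hden, add_sub_cancel_left]
  field_simp

theorem riccati_threshold_lt_pole (ha : 0 < a) (hb : 0 < b) (hξ : 0 ≤ ξ) :
    1 + a * ξ / (a + b + b * ξ) < 1 + a / b := by
  rw [add_lt_add_iff_left, div_lt_div_iff₀ (by positivity) hb]
  nlinarith [mul_pos ha (add_pos ha hb)]

end RiccatiMobius

/-- the time `τ = (1/a)ln(1 + aξ/(a + b + bξ))` is the first time the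
solution `φ` of the Riccati comparison equation reaches the threshold `ξ`. -/
theorem stmt10 (a b ξ : ℝ) (ha : 0 < a) (hb : 0 < b) (hξ : 0 < ξ)
    (φ : ℝ → ℝ)
    (hφ : ∀ t : ℝ, φ t =
      (a + b) * (Real.exp (a * t) - 1) / (a + b * (1 - Real.exp (a * t))))
    (τ : ℝ) (hτ : τ = (1 / a) * Real.log (1 + a * ξ / (a + b + b * ξ))) :
    0 < τ ∧ τ < (1 / a) * Real.log (1 + a / b) ∧ φ τ = ξ ∧
      ∀ t ∈ Ico (0 : ℝ) τ, φ t < ξ := by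
  have hD : 0 < a + b + b * ξ := by positivity
  have hthreshold_gt_one : 1 < 1 + a * ξ / (a + b + b * ξ) := lt_add_of_pos_right 1 (by positivity)
  have hexp : exp (a * τ) = 1 + a * ξ / (a + b + b * ξ) := by
    rw [hτ, ← mul_assoc, mul_one_div_cancel ha.ne', one_mul, exp_log (by linarith)]
  have hpole := riccati_threshold_lt_pole ha hb hξ.le
  refine ⟨?_, ?_, ?_, ?_⟩
  · rw [hτ]
    exact mul_pos (by positivity) (log_pos hthreshold_gt_one)
  · rw [hτ]
    gcongr
  · rw [hφ, hexp]
    exact riccati_mobius_threshold ha.ne' (by positivity) hD.ne'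
  · rintro t ⟨-, htτ⟩
    have hlt : exp (a * t) < 1 + a * ξ / (a + b + b * ξ) :=
      hexp ▸ exp_lt_exp.mpr (mul_lt_mul_of_pos_left htτ ha)
    rw [hφ, riccati_mobius_lt_iff (riccati_denom_pos_of_lt_pole hb (hlt.trans hpole)) hD]
    exact hlt
end

section
/- Let a, b, ξ > 0 and τ = (1/a)·ln(1 + aξ/(a + b + bξ)). Suppose q : [t₀, t₁] → ℝ is differentiable with q(t₀) = 0, q(t) ≥ 0 for all t ∈ [t₀, t₁], and q'(t) ≤ a(1 + q(t)) + b(1 + q(t))² for all t ∈ [t₀, t₁]. If t₁ − t₀ < τ, then q(t) < ξ for all t ∈ [t₀, t₁]. -/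
/-!
The substitution `u = 1 / (1 + q)` turns the Riccati inequality `q' ≤ a(1 + q) + b(1 + q)²` into
the linear one `u' ≥ -(a u + b)`. With the integrating factor `exp (a t)` this gives
`1 + b / a ≤ exp (a (t - t₀)) (u t + b / a)`, and this lower bound keeps `u t` above `1 / (1 + ξ)`,
that is `q t` below `ξ`, as long as `exp (a (t - t₀)) < 1 + a ξ / (a + b + b ξ)`, that is `t - t₀ < τ`.
-/

open Set Real

theorem monotoneOn_exp_mul_add_div_of_deriv_ge {a b : ℝ} (ha : a ≠ 0) {u u' : ℝ → ℝ}
    {s : Set ℝ} (hs : Convex ℝ s) (hu : ∀ t ∈ s, HasDerivAt u (u' t) t)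
    (hu' : ∀ t ∈ s, -(a * u t + b) ≤ u' t) :
    MonotoneOn (fun t => exp (a * t) * (u t + b / a)) s := by
  have hderiv : ∀ t ∈ s, HasDerivAt (fun t => exp (a * t) * (u t + b / a))
      (exp (a * t) * (a * u t + b + u' t)) t := by
    intro t ht
    have hexp : HasDerivAt (fun t => exp (a * t)) (exp (a * t) * a) t := by
      simpa using ((hasDerivAt_id t).const_mul a).exp
    refine (hexp.mul ((hu t ht).add_const (b / a))).congr_deriv ?_
    field_simp
  refine monotoneOn_of_deriv_nonneg hs (fun t ht => (hderiv t ht).continuousAt.continuousWithinAt)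
    (fun t ht => (hderiv t (interior_subset ht)).differentiableAt.differentiableWithinAt)
    fun t ht => ?_
  rw [(hderiv t (interior_subset ht)).deriv]
  have := hu' t (interior_subset ht)
  have := exp_pos (a * t)
  nlinarith

theorem add_div_le_exp_mul_add_div_of_deriv_ge {a b : ℝ} (ha : a ≠ 0) {u u' : ℝ → ℝ}
    {s : Set ℝ} (hs : Convex ℝ s) (hu : ∀ t ∈ s, HasDerivAt u (u' t) t)
    (hu' : ∀ t ∈ s, -(a * u t + b) ≤ u' t) {t₀ t : ℝ} (ht₀ : t₀ ∈ s) (ht : t ∈ s)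
    (hle : t₀ ≤ t) :
    u t₀ + b / a ≤ exp (a * (t - t₀)) * (u t + b / a) := by
  have := monotoneOn_exp_mul_add_div_of_deriv_ge ha hs hu hu' ht₀ ht hle
  rwa [mul_sub, exp_sub, div_mul_eq_mul_div, le_div_iff₀ (exp_pos _), mul_comm]

theorem neg_mul_inv_add_le_neg_div_sq {a b x x' : ℝ} (hx : 0 < 1 + x)
    (hx' : x' ≤ a * (1 + x) + b * (1 + x) ^ 2) :
    -(a * (1 + x)⁻¹ + b) ≤ -x' / (1 + x) ^ 2 := by
  rw [neg_div, neg_le_neg_iff, div_le_iff₀ (by positivity)]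
  calc (a * (1 + x)⁻¹ + b) * (1 + x) ^ 2 = a * (1 + x) + b * (1 + x) ^ 2 := by field_simp
    _ ≥ x' := hx'

theorem lt_of_one_add_div_le_mul_inv_add_div {a b ξ x E : ℝ} (ha : 0 < a) (hb : 0 < b)
    (hξ : 0 < ξ) (hx : 0 < 1 + x) (hE : E < 1 + a * ξ / (a + b + b * ξ))
    (hkey : 1 + b / a ≤ E * ((1 + x)⁻¹ + b / a)) : x < ξ := by
  by_contra! hξx
  have hE0 : 0 < E := by
    by_contra! h
    have : E * ((1 + x)⁻¹ + b / a) ≤ 0 := mul_nonpos_of_nonpos_of_nonneg h (by positivity)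
    have : 0 < 1 + b / a := by positivity
    linarith
  have hinv : (1 + x)⁻¹ ≤ (1 + ξ)⁻¹ := inv_anti₀ (by positivity) (by linarith)
  have hkeyξ : 1 + b / a ≤ E * ((1 + ξ)⁻¹ + b / a) := hkey.trans (by gcongr)
  have hD : 0 < a + b + b * ξ := by positivity
  rw [← sub_lt_iff_lt_add', lt_div_iff₀ hD] at hE
  field_simp at hkeyξ
  nlinarith

theorem stmt11_general (a b ξ : ℝ) (ha : 0 < a) (hb : 0 < b) (hξ : 0 < ξ)
    (τ : ℝ) (hτ : τ = (1 / a) * Real.log (1 + a * ξ / (a + b + b * ξ)))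
    (t₀ t₁ : ℝ) (q q' : ℝ → ℝ)
    (hderiv : ∀ t ∈ Icc t₀ t₁, HasDerivAt q (q' t) t)
    (hq0 : q t₀ = 0) (hqnn : ∀ t ∈ Icc t₀ t₁, 0 ≤ q t)
    (hq' : ∀ t ∈ Icc t₀ t₁, q' t ≤ a * (1 + q t) + b * (1 + q t) ^ 2)
    (hlt : t₁ - t₀ < τ) :
    ∀ t ∈ Icc t₀ t₁, q t < ξ := by
  intro t ht
  have hpos : ∀ s ∈ Icc t₀ t₁, 0 < 1 + q s := fun s hs => by linarith [hqnn s hs]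
  have hcomp := add_div_le_exp_mul_add_div_of_deriv_ge (u := fun s => (1 + q s)⁻¹) ha.ne'
    (convex_Icc t₀ t₁)
    (fun s hs => ((hderiv s hs).const_add 1).inv (hpos s hs).ne')
    (fun s hs => neg_mul_inv_add_le_neg_div_sq (hpos s hs) (hq' s hs))
    (left_mem_Icc.2 (ht.1.trans ht.2)) ht ht.1
  simp only [hq0, add_zero, inv_one] at hcomp
  have hexp : exp (a * (t - t₀)) < 1 + a * ξ / (a + b + b * ξ) := by
    rw [← exp_log (by positivity : 0 < 1 + a * ξ / (a + b + b * ξ)), exp_lt_exp,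
      ← lt_div_iff₀' ha, ← one_div_mul_eq_div, ← hτ]
    linarith [ht.2]
  exact lt_of_one_add_div_le_mul_inv_add_div ha hb hξ (hpos t ht) hexp hcomp

/-- the comparison-lemma step. If `q(t₀) = 0`, `q ≥ 0` and
`q' ≤ a(1 + q) + b(1 + q)²` on `[t₀, t₁]`, and `t₁ - t₀ < τ`, then `q < ξ` on `[t₀, t₁]`. -/
theorem stmt11 (a b ξ : ℝ) (ha : 0 < a) (hb : 0 < b) (hξ : 0 < ξ)
    (τ : ℝ) (hτ : τ = (1 / a) * Real.log (1 + a * ξ / (a + b + b * ξ)))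
    (t₀ t₁ : ℝ) (h01 : t₀ ≤ t₁) (q q' : ℝ → ℝ)
    (hderiv : ∀ t ∈ Icc t₀ t₁, HasDerivAt q (q' t) t)
    (hq0 : q t₀ = 0) (hqnn : ∀ t ∈ Icc t₀ t₁, 0 ≤ q t)
    (hq' : ∀ t ∈ Icc t₀ t₁, q' t ≤ a * (1 + q t) + b * (1 + q t) ^ 2)
    (hlt : t₁ - t₀ < τ) :
    ∀ t ∈ Icc t₀ t₁, q t < ξ :=
  stmt11_general a b ξ ha hb hξ τ hτ t₀ t₁ q q' hderiv hq0 hqnn hq' hlt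
end
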